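/- (i) For every integer N ≥ 12 there exist a positive integer r and an IrMOA(r, 2+N, 3²2^N, 2); (ii) for every integer N ≥ 11 there exist a positive integer r and an IrMOA(r, 3+N, 3³2^N, 2); (iii) for every integer N ≥ 10 there exist a positive integer r and an IrMOA(r, 4+N, 3⁴2^N, 2). -/

import Mathlib

open Finset

/-- The Hamming distance between two rows of an array: the number of columns
in which the rows differ. -/
def hamDist {ι κ : Type*} [Fintype κ] (A : ι → κ → ℕ) (i i' : ι) : ℕ :=
  (Finset.univ.filter fun j => A i j ≠ A i' j).card

/-- `MD(A)`: the minimum Hamming distance over all pairs of distinct rows. -/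
noncomputable def minDist {ι κ : Type*} [Fintype κ] (A : ι → κ → ℕ) : ℕ :=
  sInf {n | ∃ i i', i ≠ i' ∧ hamDist A i i' = n}

/-- `A` is a mixed orthogonal array of strength `k` (rows indexed by `ι`,
columns by `κ`, column `j` taking values in `{0, …, lv j − 1}`): in the
subarray given by any choice of at most `k` columns, every tuple of symbols
occurs equally often as a row, namely (number of rows)/(product of the levels
of the chosen columns) times. -/
def IsMOA {ι κ : Type*} [Fintype ι] [Fintype κ] [DecidableEq κ]
    (A : ι → κ → ℕ) (lv : κ → ℕ) (k : ℕ) : Prop :=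
  (∀ i j, A i j < lv j) ∧
  ∀ S : Finset κ, S.card ≤ k → ∀ x : κ → ℕ, (∀ j ∈ S, x j < lv j) →
    (Finset.univ.filter fun i : ι => ∀ j ∈ S, A i j = x j).card * ∏ j ∈ S, lv j
      = Fintype.card ι

/-- An irredundant mixed orthogonal array of strength `k`: an MOA of strength
`k` any two distinct rows of which have Hamming distance at least `k+1`. -/
def IsIrMOA {ι κ : Type*} [Fintype ι] [Fintype κ] [DecidableEq κ]
    (A : ι → κ → ℕ) (lv : κ → ℕ) (k : ℕ) : Prop :=
  IsMOA A lv k ∧ ∀ i i' : ι, i ≠ i' → k + 1 ≤ hamDist A i i'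

/-- A difference scheme `D(r, c, d)`: an `r × c` matrix over `ℤ_d` such that
for any two distinct columns the `r` differences of corresponding entries
take each value of `ℤ_d` exactly `r/d` times. -/
def IsDiffScheme {r c d : ℕ} (B : Fin r → Fin c → ZMod d) : Prop :=
  ∀ j j' : Fin c, j ≠ j' → ∀ g : ZMod d,
    (Finset.univ.filter fun i : Fin r => B i j - B i j' = g).card * d = r

open Finset Function

/-!
Every array is built by one construction. Let `B : σ →+ (κ → ZMod 2)` parametrize a binary
linear code of strength two and minimum distance three, and fix words `g i x` for each
three-level factor `i` and level `x`. The rows are indexed by `(u, s)`, with `u` running over the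
full factorial `(ZMod 3)^a`, and read `(u, ∑ i, g i (u i) + B s)`. Every translate of the code
is an orthogonal array of strength two, hence so is the whole array; it is irredundant as soon as
each `g i x - g i x'` (`x ≠ x'`) lies at distance at least two from the code and each sum of two
such differences for distinct factors lies outside it.

The code used is the `[15, 4]` simplex code (its columns are the fifteen nonzero vectors of
`(ZMod 2)^4`, so any two are independent) punctured to its first `m` columns, with `g i x`
supported on the positions `0` and `2 i + x`. The separation conditions are checked by
computation for `a = 2, m = 8` and `a = 4, m = 10`, and only get easier with more columns and
fewer factors. Juxtaposing two irredundant arrays (all pairs of rows) adds up both kinds of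
columns, which reaches every larger `N`.
-/

section Reindex

variable {ι ι' κ κ' : Type*} [Fintype ι] [Fintype ι'] [Fintype κ] [Fintype κ']
  [DecidableEq κ] [DecidableEq κ'] {A : ι → κ → ℕ} {lv : κ → ℕ} {k : ℕ}

omit [Fintype ι] [DecidableEq κ] in
lemma hamDist_eq_hammingDist (A : ι → κ → ℕ) (i i' : ι) :
    hamDist A i i' = hammingDist (A i) (A i') := rfl

lemma IsMOA.comp_rows (h : IsMOA A lv k) (e : ι' ≃ ι) : IsMOA (fun i => A (e i)) lv k := by
  refine ⟨fun i j => h.1 (e i) j, fun S hS x hx => ?_⟩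
  rw [Fintype.card_congr e, ← h.2 S hS x hx]
  congr 1
  exact card_equiv e (by simp)

lemma IsIrMOA.comp_rows (h : IsIrMOA A lv k) (e : ι' ≃ ι) :
    IsIrMOA (fun i => A (e i)) lv k :=
  ⟨h.1.comp_rows e, fun i i' hii' => h.2 (e i) (e i') (e.injective.ne hii')⟩

lemma IsMOA.comp_cols (h : IsMOA A lv k) (e : κ' ≃ κ) :
    IsMOA (fun i j => A i (e j)) (fun j => lv (e j)) k := by
  refine ⟨fun i j => h.1 i (e j), fun S hS x hx => ?_⟩
  have key := h.2 (S.map e.toEmbedding) (by simpa using hS) (fun j => x (e.symm j))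
    (fun j hj => by simpa using hx (e.symm j) (by simpa using hj))
  rw [prod_map] at key
  rw [← key]
  congr 2
  ext i
  simp [← e.forall_congr_right]

lemma IsIrMOA.comp_cols (h : IsIrMOA A lv k) (e : κ' ≃ κ) :
    IsIrMOA (fun i j => A i (e j)) (fun j => lv (e j)) k := by
  refine ⟨h.1.comp_cols e, fun i i' hii' => (h.2 i i' hii').trans_eq ?_⟩
  exact card_equiv e.symm (by simp)

lemma IsIrMOA.exists_fin [Nonempty ι] (h : IsIrMOA A lv k) :
    ∃ (r : ℕ) (C : Fin r → κ → ℕ), 0 < r ∧ IsIrMOA C lv k :=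
  ⟨_, _, Fintype.card_pos, h.comp_rows (Fintype.equivFin ι).symm⟩

end Reindex

lemma hammingDist_sumElim {α β γ : Type*} [Fintype α] [Fintype β] [DecidableEq γ]
    (x₁ y₁ : α → γ) (x₂ y₂ : β → γ) :
    hammingDist (Sum.elim x₁ x₂) (Sum.elim y₁ y₂) = hammingDist x₁ y₁ + hammingDist x₂ y₂ := by
  simp only [hammingDist, card_filter, Fintype.sum_sum_type, Sum.elim_inl, Sum.elim_inr]
  rfl

section BlockProduct

variable {ι₁ ι₂ κ₁ κ₂ : Type*} [Fintype ι₁] [Fintype ι₂] [Fintype κ₁] [Fintype κ₂]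
  [DecidableEq κ₁] [DecidableEq κ₂] {A : ι₁ → κ₁ → ℕ} {F : ι₁ → ι₂ → κ₂ → ℕ}
  {lv₁ : κ₁ → ℕ} {lv₂ : κ₂ → ℕ} {k : ℕ}

lemma IsMOA.sumElim (hA : IsMOA A lv₁ k) (hF : ∀ i, IsMOA (F i) lv₂ k) :
    IsMOA (fun p : ι₁ × ι₂ => Sum.elim (A p.1) (F p.1 p.2)) (Sum.elim lv₁ lv₂) k := by
  refine ⟨fun ⟨i, s⟩ j => j.rec (hA.1 i) ((hF i).1 s), fun S hS x hx => ?_⟩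
  set T := ({i | ∀ j ∈ S.toLeft, A i j = x (.inl j)} : Finset ι₁)
  have hprod : ∏ j ∈ S, Sum.elim lv₁ lv₂ j =
      (∏ j ∈ S.toLeft, lv₁ j) * ∏ j ∈ S.toRight, lv₂ j := by
    conv_lhs => rw [← toLeft_disjSum_toRight (u := S)]
    simp only [prod_disjSum, Sum.elim_inl, Sum.elim_inr]
  have hcount : #{p : ι₁ × ι₂ | ∀ j ∈ S, Sum.elim (A p.1) (F p.1 p.2) j = x j} =
      ∑ i ∈ T, #{s | ∀ j ∈ S.toRight, F i s j = x (.inr j)} := by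
    simp only [card_filter, Fintype.sum_prod_type, sum_filter, T, Sum.forall, mem_toLeft,
      mem_toRight, Sum.elim_inl, Sum.elim_inr, ite_and]
    exact sum_congr rfl fun i _ => by split_ifs <;> simp
  have hF' : ∀ i, #{s | ∀ j ∈ S.toRight, F i s j = x (.inr j)} * ∏ j ∈ S.toRight, lv₂ j
      = Fintype.card ι₂ := fun i =>
    (hF i).2 _ (card_toRight_le.trans hS) _ fun j hj => by simpa using hx _ (mem_toRight.1 hj)
  have hA' : #T * ∏ j ∈ S.toLeft, lv₁ j = Fintype.card ι₁ :=
    hA.2 _ (card_toLeft_le.trans hS) _ fun j hj => by simpa using hx _ (mem_toLeft.1 hj)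
  calc _ = ∑ i ∈ T, #{s | ∀ j ∈ S.toRight, F i s j = x (.inr j)} * (∏ j ∈ S.toRight, lv₂ j)
        * ∏ j ∈ S.toLeft, lv₁ j := by
        rw [hprod, hcount, sum_mul]
        exact sum_congr rfl fun i _ => by ring
    _ = Fintype.card (ι₁ × ι₂) := by
        simp only [hF', sum_const, smul_eq_mul, Fintype.card_prod, ← hA']
        ring

lemma IsIrMOA.sumElim (hA : IsIrMOA A lv₁ k) (hF : ∀ i, IsIrMOA (F i) lv₂ k) :
    IsIrMOA (fun p : ι₁ × ι₂ => Sum.elim (A p.1) (F p.1 p.2)) (Sum.elim lv₁ lv₂) k := by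
  refine ⟨hA.1.sumElim fun i => (hF i).1, ?_⟩
  rintro ⟨i, s⟩ ⟨i', s'⟩ hne
  rw [hamDist_eq_hammingDist, hammingDist_sumElim]
  by_cases hi : i = i'
  · subst hi
    exact le_add_left ((hF i).2 s s' fun hs => hne (hs ▸ rfl))
  · exact le_add_right (hA.2 i i' hi)

end BlockProduct

lemma AddMonoidHom.card_fiber_mul_card {G M : Type*} [AddGroup G] [Fintype G] [AddMonoid M]
    [Fintype M] [DecidableEq M] (f : G →+ M) (hf : Surjective f) (y : M) :
    #{g | f g = y} * Fintype.card M = Fintype.card G := by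
  have hsum := card_eq_sum_card_fiberwise (s := univ) (t := univ) (f := f) fun _ _ => mem_univ _
  rw [card_univ] at hsum
  rw [hsum, sum_congr rfl fun z _ => card_fiber_eq_of_mem_range f (hf z) (hf y), sum_const,
    card_univ, smul_eq_mul, mul_comm]

lemma ZMod.val_eq_iff_eq_natCast {n : ℕ} [NeZero n] {z : ZMod n} {a : ℕ} (ha : a < n) :
    z.val = a ↔ z = a :=
  ⟨fun h => h ▸ (z.natCast_zmod_val).symm, fun h => h ▸ ZMod.val_cast_of_lt ha⟩

section LinearArray

variable {σ κ : Type*} [AddCommGroup σ] [Fintype σ] [Fintype κ] [DecidableEq κ] {p : ℕ} [NeZero p]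
  {k : ℕ}

lemma isMOA_val_add_of_surjective (B : σ →+ (κ → ZMod p)) (t : κ → ZMod p)
    (hB : ∀ S : Finset κ, #S ≤ k → Surjective fun s (j : S) => B s j) :
    IsMOA (fun s j => (t j + B s j).val) (fun _ => p) k := by
  refine ⟨fun s j => ZMod.val_lt _, fun S hS x hx => ?_⟩
  let φ : σ →+ (S → ZMod p) := AddMonoidHom.mk' (fun s j => B s j) fun a b => by ext; simp
  have hfib := φ.card_fiber_mul_card (hB S hS) fun j => (x j : ZMod p) - t j
  rw [Fintype.card_fun, ZMod.card, Fintype.card_coe] at hfib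
  rw [prod_const, ← hfib]
  congr 2
  ext s
  simp only [mem_filter, mem_univ, true_and, funext_iff, Subtype.forall, φ,
    AddMonoidHom.mk'_apply]
  exact forall₂_congr fun j hj => by rw [ZMod.val_eq_iff_eq_natCast (hx j hj), eq_sub_iff_add_eq']

lemma isMOA_val_pi (α : Type*) [Fintype α] [DecidableEq α] (q k : ℕ) [NeZero q] :
    IsMOA (fun (u : α → ZMod q) i => (u i).val) (fun _ => q) k := by
  simpa using isMOA_val_add_of_surjective (AddMonoidHom.id (α → ZMod q)) 0 fun S _ y =>
    ⟨fun j => if h : j ∈ S then y ⟨j, h⟩ else 0, by ext ⟨j, hj⟩; simp [hj]⟩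

omit [AddCommGroup σ] [Fintype σ] [Fintype κ] in
lemma surjective_restrict_of_card_le_two {R : Type*} [Nonempty σ] (B : σ → κ → R)
    (h₁ : ∀ j, Surjective fun s => B s j)
    (h₂ : ∀ j j', j ≠ j' → Surjective fun s => (B s j, B s j'))
    (S : Finset κ) (hS : #S ≤ 2) : Surjective fun s (j : S) => B s j := by
  intro y
  obtain h0 | h1 | h2 : #S = 0 ∨ #S = 1 ∨ #S = 2 := by omega
  · obtain rfl := card_eq_zero.1 h0
    exact ⟨Classical.arbitrary σ, funext fun j => absurd j.2 (notMem_empty _)⟩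
  · obtain ⟨j, rfl⟩ := card_eq_one.1 h1
    obtain ⟨s, hs⟩ := h₁ j (y ⟨j, mem_singleton_self j⟩)
    refine ⟨s, funext fun ⟨j', hj'⟩ => ?_⟩
    obtain rfl := mem_singleton.1 hj'
    exact hs
  · obtain ⟨j, j', hjj', rfl⟩ := card_eq_two.1 h2
    obtain ⟨s, hs⟩ := h₂ j j' hjj' (y ⟨j, by simp⟩, y ⟨j', by simp⟩)
    refine ⟨s, funext fun ⟨i, hi⟩ => ?_⟩
    rcases mem_insert.1 hi with rfl | hi
    · exact congrArg Prod.fst hs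
    · obtain rfl := mem_singleton.1 hi
      exact congrArg Prod.snd hs

end LinearArray

lemma hammingNorm_comp_le {κ κ' R : Type*} [Fintype κ] [Fintype κ'] [Zero R] [DecidableEq R]
    (v : κ' → R) (e : κ ↪ κ') : hammingNorm (v ∘ e) ≤ hammingNorm v :=
  card_le_card_of_injOn e (fun j hj => by simpa using hj) e.injective.injOn

section Coset

variable {α σ κ : Type*} [AddCommGroup σ] {p q : ℕ}

def shiftSum [Fintype α] (g : α → ZMod q → κ → ZMod p) (u : α → ZMod q) : κ → ZMod p :=
  ∑ i, g i (u i)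

def cosetArray [Fintype α] (B : σ →+ (κ → ZMod p)) (g : α → ZMod q → κ → ZMod p) :
    (α → ZMod q) × σ → α ⊕ κ → ℕ :=
  fun r => Sum.elim (fun i => (r.1 i).val) fun j => (shiftSum g r.1 j + B r.2 j).val

/-- Two distinct rows of `cosetArray B g` whose three-level parts differ in `0`, `1` or `2`
positions have binary parts differing in at least `3`, `2` or `1` positions. -/
structure IsSeparating [Fintype κ] (B : σ →+ (κ → ZMod p)) (g : α → ZMod q → κ → ZMod p) :
    Prop where
  code : ∀ s, s ≠ 0 → 3 ≤ hammingNorm (B s)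
  single : ∀ i x x', x ≠ x' → ∀ s, 2 ≤ hammingNorm (g i x - g i x' + B s)
  pair : ∀ i i', i ≠ i' → ∀ x x' y y', x ≠ x' → y ≠ y' → ∀ s,
    g i x - g i x' + (g i' y - g i' y') + B s ≠ 0

lemma IsSeparating.of_comp [Fintype κ] {α' κ' : Type*} [Fintype κ'] (e : κ ↪ κ') (f : α' ↪ α)
    {B : σ →+ (κ → ZMod p)} {B' : σ →+ (κ' → ZMod p)} {g : α → ZMod q → κ → ZMod p}
    {g' : α' → ZMod q → κ' → ZMod p} (hB : ∀ s j, B' s (e j) = B s j)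
    (hg : ∀ i x j, g' i x (e j) = g (f i) x j) (h : IsSeparating B g) :
    IsSeparating B' g' := by
  have hBe : ∀ s, B s = B' s ∘ e := fun s => funext fun j => (hB s j).symm
  have hge : ∀ i x, g (f i) x = g' i x ∘ e := fun i x => funext fun j => (hg i x j).symm
  refine ⟨fun s hs => ?_, fun i x x' hxx' s => ?_, fun i i' hii' x x' y y' hxx' hyy' s h0 => ?_⟩
  · calc 3 ≤ hammingNorm (B s) := h.code s hs
      _ ≤ _ := hBe s ▸ hammingNorm_comp_le _ e
  · calc 2 ≤ hammingNorm (g (f i) x - g (f i) x' + B s) := h.single (f i) x x' hxx' s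
      _ = hammingNorm ((g' i x - g' i x' + B' s) ∘ e) := by rw [hge, hge, hBe]; rfl
      _ ≤ _ := hammingNorm_comp_le _ e
  · refine h.pair (f i) (f i') (f.injective.ne hii') x x' y y' hxx' hyy' s ?_
    rw [hge, hge, hge, hge, hBe]
    exact congrArg (· ∘ e) h0

variable [Fintype α]

lemma shiftSum_sub_shiftSum (g : α → ZMod q → κ → ZMod p) (u u' : α → ZMod q) :
    shiftSum g u - shiftSum g u' = ∑ i ∈ {i | u i ≠ u' i}, (g i (u i) - g i (u' i)) := by
  rw [shiftSum, shiftSum, ← sum_sub_distrib]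
  refine (sum_filter_of_ne (p := fun i => u i ≠ u' i) fun i _ hi hu => hi ?_).symm
  rw [hu, sub_self]

variable [DecidableEq α] [Fintype κ]

lemma IsSeparating.three_le {B : σ →+ (κ → ZMod p)} {g : α → ZMod q → κ → ZMod p}
    (h : IsSeparating B g) {u u' : α → ZMod q} {s : σ} (hne : u ≠ u' ∨ s ≠ 0) :
    3 ≤ hammingDist u u' + hammingNorm (shiftSum g u - shiftSum g u' + B s) := by
  rw [shiftSum_sub_shiftSum]
  have hD : hammingDist u u' = #{i | u i ≠ u' i} := rfl
  have hmem : ∀ {i}, i ∈ ({i | u i ≠ u' i} : Finset α) → u i ≠ u' i := fun hi => (mem_filter.1 hi).2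
  obtain h0 | h1 | h2 | h3 : #{i | u i ≠ u' i} = 0 ∨ #{i | u i ≠ u' i} = 1 ∨
      #{i | u i ≠ u' i} = 2 ∨ 3 ≤ #{i | u i ≠ u' i} := by omega
  · have huu' : u = u' := hammingDist_eq_zero.1 (hD.trans h0)
    rw [card_eq_zero.1 h0, sum_empty, zero_add]
    exact le_add_left (h.code s (hne.resolve_left (not_not.2 huu')))
  · obtain ⟨i, hi⟩ := card_eq_one.1 h1
    rw [hi, sum_singleton, hD, h1]
    have := h.single i _ _ (hmem (hi ▸ mem_singleton_self i)) s
    omega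
  · obtain ⟨i, i', hii', hi⟩ := card_eq_two.1 h2
    rw [hi, sum_pair hii', hD, h2]
    have := hammingNorm_pos_iff.2 (h.pair i i' hii' _ _ _ _ (hmem (i := i) (by simp [hi]))
      (hmem (i := i') (by simp [hi])) s)
    omega
  · omega

theorem isIrMOA_cosetArray [Fintype σ] [DecidableEq κ] [NeZero p] [NeZero q]
    {B : σ →+ (κ → ZMod p)} {g : α → ZMod q → κ → ZMod p}
    (hB : ∀ S : Finset κ, #S ≤ 2 → Surjective fun s (j : S) => B s j) (h : IsSeparating B g) :
    IsIrMOA (cosetArray B g) (Sum.elim (fun _ => q) fun _ => p) 2 := by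
  refine ⟨(isMOA_val_pi α q 2).sumElim fun u => isMOA_val_add_of_surjective B (shiftSum g u) hB,
    ?_⟩
  rintro ⟨u, s⟩ ⟨u', s'⟩ hne
  simp only [hamDist_eq_hammingDist, cosetArray]
  rw [hammingDist_sumElim,
    hammingDist_comp (fun _ => ZMod.val) fun _ => ZMod.val_injective q,
    hammingDist_comp (fun _ => ZMod.val) fun _ => ZMod.val_injective p]
  have hdiff : shiftSum g u - shiftSum g u' + B (s - s') =
      shiftSum g u + B s - (shiftSum g u' + B s') := by
    rw [map_sub]; abel
  calc 2 + 1 ≤ hammingDist u u' + hammingNorm (shiftSum g u - shiftSum g u' + B (s - s')) :=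
        h.three_le <| by
          by_contra! hc
          exact hne (Prod.ext hc.1 (sub_eq_zero.1 hc.2))
    _ = _ := by
        rw [hdiff]
        simp only [hammingNorm, hammingDist, Pi.sub_apply, Pi.add_apply, sub_ne_zero]

end Coset

def HasIrMOA (a N : ℕ) : Prop :=
  ∃ (r : ℕ) (C : Fin r → Fin a ⊕ Fin N → ℕ), 0 < r ∧
    IsIrMOA C (Sum.elim (fun _ => 3) fun _ => 2) 2

lemma HasIrMOA.add {a₁ N₁ a₂ N₂ : ℕ} (h₁ : HasIrMOA a₁ N₁) (h₂ : HasIrMOA a₂ N₂) :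
    HasIrMOA (a₁ + a₂) (N₁ + N₂) := by
  obtain ⟨r₁, C₁, hr₁, hC₁⟩ := h₁
  obtain ⟨r₂, C₂, hr₂, hC₂⟩ := h₂
  have : Nonempty (Fin r₁ × Fin r₂) := ⟨(⟨0, hr₁⟩, ⟨0, hr₂⟩)⟩
  let e : Fin (a₁ + a₂) ⊕ Fin (N₁ + N₂) ≃ (Fin a₁ ⊕ Fin N₁) ⊕ (Fin a₂ ⊕ Fin N₂) :=
    (Equiv.sumCongr finSumFinEquiv.symm finSumFinEquiv.symm).trans
      (Equiv.sumSumSumComm _ _ _ _)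
  have hC := (hC₁.sumElim fun _ => hC₂).comp_cols e
  have hlv : (fun j => Sum.elim (Sum.elim (fun _ => 3) fun _ => 2)
      (Sum.elim (fun _ => 3) fun _ => 2) (e j)) = Sum.elim (fun _ => 3) fun _ => 2 := by
    funext j
    rcases j with j | j <;> rcases h : finSumFinEquiv.symm j with j' | j' <;>
      simp [e, Equiv.sumSumSumComm, h]
  rw [hlv] at hC
  exact hC.exists_fin

lemma hasIrMOA_of_isSeparating {a N : ℕ} {σ : Type*} [AddCommGroup σ] [Fintype σ]
    (B : σ →+ (Fin N → ZMod 2)) (g : Fin a → ZMod 3 → Fin N → ZMod 2)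
    (hB : ∀ S : Finset (Fin N), #S ≤ 2 → Surjective fun s (j : S) => B s j)
    (h : IsSeparating B g) : HasIrMOA a N :=
  (isIrMOA_cosetArray hB h).exists_fin

def simplexGen : Matrix (Fin 4) (Fin 15) (ZMod 2) :=
  !![1, 0, 0, 0, 0, 0, 1, 1, 0, 1, 0, 1, 1, 1, 1;
     0, 1, 0, 0, 1, 0, 0, 1, 1, 0, 1, 0, 1, 1, 1;
     0, 0, 1, 0, 1, 1, 0, 0, 0, 1, 1, 1, 0, 1, 1;
     0, 0, 0, 1, 1, 1, 1, 0, 1, 0, 0, 1, 1, 0, 1]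

def puncturedSimplexCode (m : ℕ) (hm : m ≤ 15) : (Fin 4 → ZMod 2) →+ (Fin m → ZMod 2) :=
  (Matrix.vecMulLinear (simplexGen.submatrix id (Fin.castLE hm))).toAddMonoidHom

def cosetShift (a m : ℕ) : Fin a → ZMod 3 → Fin m → ZMod 2 :=
  fun i x j => if x ≠ 0 ∧ (j.val = 0 ∨ j.val = 2 * i.val + x.val) then 1 else 0

lemma simplexGen_surjective_single :
    ∀ j, Surjective fun v : Fin 4 → ZMod 2 => Matrix.vecMul v simplexGen j := by
  decide +kernel

lemma simplexGen_surjective_pair : ∀ j j', j ≠ j' → Surjective fun v : Fin 4 → ZMod 2 =>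
    (Matrix.vecMul v simplexGen j, Matrix.vecMul v simplexGen j') := by
  decide +kernel

lemma isSeparating_eight : IsSeparating (puncturedSimplexCode 8 (by norm_num)) (cosetShift 2 8) :=
  ⟨by decide +kernel, by decide +kernel, by decide +kernel⟩

lemma isSeparating_ten : IsSeparating (puncturedSimplexCode 10 (by norm_num)) (cosetShift 4 10) :=
  ⟨by decide +kernel, by decide +kernel, by decide +kernel⟩

lemma hasIrMOA_of_puncturedSimplexCode {a₀ m₀ a m : ℕ} (ha : a ≤ a₀) (hm₀ : m₀ ≤ m) (hm : m ≤ 15)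
    (h : IsSeparating (puncturedSimplexCode m₀ (hm₀.trans hm)) (cosetShift a₀ m₀)) : HasIrMOA a m :=
  hasIrMOA_of_isSeparating (puncturedSimplexCode m hm) (cosetShift a m)
    (surjective_restrict_of_card_le_two _ (fun j => simplexGen_surjective_single (Fin.castLE hm j))
      fun _ _ hjj' => simplexGen_surjective_pair _ _ ((Fin.castLE_injective hm).ne hjj'))
    (h.of_comp (Fin.castLEEmb hm₀) (Fin.castLEEmb ha) (fun _ _ => rfl) fun _ _ _ => rfl)

lemma hasIrMOA_of_le_two {a N : ℕ} (ha : a ≤ 2) (hN : 8 ≤ N) : HasIrMOA a N := by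
  induction N using Nat.strong_induction_on generalizing a with
  | _ N ih =>
    rcases le_or_gt N 15 with hN' | hN'
    · exact hasIrMOA_of_puncturedSimplexCode ha hN hN' isSeparating_eight
    · have h := (hasIrMOA_of_puncturedSimplexCode ha le_rfl (by norm_num) isSeparating_eight).add
        (ih (N - 8) (by omega) (Nat.zero_le 2) (by omega))
      rwa [add_zero, Nat.add_sub_cancel' (by omega : 8 ≤ N)] at h

lemma hasIrMOA_of_le_four {a N : ℕ} (ha : a ≤ 4) (hN : 10 ≤ N) : HasIrMOA a N := by
  rcases le_or_gt N 15 with hN' | hN'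
  · exact hasIrMOA_of_puncturedSimplexCode ha hN hN' isSeparating_ten
  · have h := (hasIrMOA_of_le_two (min_le_right a 2) le_rfl).add
      (hasIrMOA_of_le_two (a := a - min a 2) (by omega) (by omega : 8 ≤ N - 8))
    rwa [Nat.add_sub_cancel' (min_le_left a 2), Nat.add_sub_cancel' (by omega : 8 ≤ N)] at h

/-- (i) For every `N ≥ 12` there is an `IrMOA(r, 2+N, 3²2^N, 2)`;
(ii) for every `N ≥ 11` there is an `IrMOA(r, 3+N, 3³2^N, 2)`;
(iii) for every `N ≥ 10` there is an `IrMOA(r, 4+N, 3⁴2^N, 2)`. -/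
theorem statement7 :
    (∀ N : ℕ, 12 ≤ N →
      ∃ (r : ℕ) (C : Fin r → (Fin 2 ⊕ Fin N) → ℕ),
        0 < r ∧ IsIrMOA C (Sum.elim (fun _ => 3) fun _ => 2) 2) ∧
    (∀ N : ℕ, 11 ≤ N →
      ∃ (r : ℕ) (C : Fin r → (Fin 3 ⊕ Fin N) → ℕ),
        0 < r ∧ IsIrMOA C (Sum.elim (fun _ => 3) fun _ => 2) 2) ∧
    (∀ N : ℕ, 10 ≤ N →
      ∃ (r : ℕ) (C : Fin r → (Fin 4 ⊕ Fin N) → ℕ),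
        0 < r ∧ IsIrMOA C (Sum.elim (fun _ => 3) fun _ => 2) 2) :=
  ⟨fun _ hN => hasIrMOA_of_le_two le_rfl (by omega),
    fun _ hN => hasIrMOA_of_le_four (by norm_num) (by omega),
    fun _ hN => hasIrMOA_of_le_four le_rfl hN⟩
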